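/- Let n ≥ 3 and let A = {a ∈ E^n : |a| is even}. Then for every monotone function f : A → Bool, the set E^n \ S_{A,f} is an antichain in E^n (any two distinct elements of it are incomparable); consequently D(E^n \ S_{A,f}) = 2^|E^n \ S_{A,f}|, i.e., every term in the partition of D_n induced by A is a power of D(E^0) = 2. -/
import Mathlib


/-- The `n`-dimensional cube `E^n = {0,1}^n`, realized as functions `Fin n → Bool`
with the pointwise order (`false < true`). -/
abbrev Cube (n : ℕ) := Fin n → Bool

/-- The weight of a point: the number of coordinates equal to `true`. -/
def weight {n : ℕ} (a : Cube n) : ℕ :=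
  (Finset.univ.filter fun i => a i = true).card

/-- `covers a b` means `b` covers `a`: `a ≤ b` and `|b| = |a| + 1`. -/
def covers {n : ℕ} (a b : Cube n) : Prop :=
  a ≤ b ∧ weight b = weight a + 1

/-- The upper set `S_{a,1} = {b : a ≤ b}`. -/
def upSet {n : ℕ} (a : Cube n) : Set (Cube n) := {b | a ≤ b}

/-- The lower set `S_{a,0} = {b : b ≤ a}`. -/
def downSet {n : ℕ} (a : Cube n) : Set (Cube n) := {b | b ≤ a}

/-- The subset `S_{A,f} = ⋃_{a ∈ A} S_{a, f(a)}` generated by `A` and `f : A → Bool`. -/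
def genSet {n : ℕ} (A : Set (Cube n)) (f : A → Bool) : Set (Cube n) :=
  ⋃ a : A, if f a = true then upSet a.1 else downSet a.1

/-- The local Dedekind number `D(S)`: the number of monotone functions `S → Bool`,
where `S` carries the order induced from `E^n`. -/
noncomputable def localDedekind {n : ℕ} (S : Set (Cube n)) : ℕ :=
  Nat.card {f : S → Bool // Monotone f}

/-- The `n`-th Dedekind number `D_n = D(E^n)`. -/
noncomputable def dedekind (n : ℕ) : ℕ := localDedekind (Set.univ : Set (Cube n))

/-- A set `T` is a `V₃`: a three-element subset `{v, a, b}` with `a ≠ b` such that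
either `v ⋖ a` and `v ⋖ b`, or `a ⋖ v` and `b ⋖ v`. -/
def isV3 {n : ℕ} (T : Set (Cube n)) : Prop :=
  ∃ v a b : Cube n, a ≠ b ∧ T = {v, a, b} ∧
    ((covers v a ∧ covers v b) ∨ (covers a v ∧ covers b v))

/-- `A` completely partitions `S`: for every monotone `f : A → Bool`, the number
`D(S \ S_{A,f})` is a product of Dedekind numbers. -/
def completelyPartitions {n : ℕ} (A S : Set (Cube n)) : Prop :=
  ∀ f : A → Bool, Monotone f →
    ∃ l : List ℕ, localDedekind (S \ genSet A f) = (l.map dedekind).prod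


lemma mem_genSet_self {n : ℕ} (f : {a : Cube n | Even (weight a)} → Bool)
    {x : Cube n} (hx : Even (weight x)) : x ∈ genSet {a : Cube n | Even (weight a)} f := by
  refine Set.mem_iUnion.2 ⟨⟨x, hx⟩, ?_⟩
  by_cases h : f ⟨x, hx⟩ = true
  · simp [h, upSet]
  · simp [h, downSet]

lemma weight_update {n : ℕ} (x : Cube n) (i : Fin n) (hxi : x i = false) :
    weight (Function.update x i true) = weight x + 1 := by
  unfold weight
  have : (Finset.univ.filter fun j => Function.update x i true j = true)
      = insert i (Finset.univ.filter fun j => x j = true) := by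
    ext j
    rcases eq_or_ne j i with rfl | hj
    · simp [Function.update_self]
    · simp [Function.update_of_ne hj, hj]
  rw [this, Finset.card_insert_of_notMem (by simp [hxi])]

lemma antichain_compl {n : ℕ}
    (f : {a : Cube n | Even (weight a)} → Bool) :
    IsAntichain (· ≤ ·)
      ((Set.univ : Set (Cube n)) \ genSet {a : Cube n | Even (weight a)} f) := by
  intro x hx y hy hxy hle
  obtain ⟨i, hi⟩ : ∃ i, x i ≠ y i := Function.ne_iff.1 hxy
  have hxi : x i = false ∧ y i = true := by
    have := hle i
    revert this hi; cases x i <;> cases y i <;> simp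
  have hxodd : ¬ Even (weight x) := fun h => hx.2 (mem_genSet_self f h)
  set z := Function.update x i true with hz
  have hwz : Even (weight z) := by
    rw [hz, weight_update x i hxi.1]
    exact Odd.add_one (Nat.not_even_iff_odd.1 hxodd)
  have hxz : x ≤ z := by
    intro j
    rcases eq_or_ne j i with rfl | hj
    · simp [hz, Function.update_self, hxi.1]
    · simp [hz, Function.update_of_ne hj]
  have hzy : z ≤ y := by
    intro j
    rcases eq_or_ne j i with rfl | hj
    · simp [hz, Function.update_self, hxi.2]
    · simpa [hz, Function.update_of_ne hj] using hle j
  by_cases h : f ⟨z, hwz⟩ = true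
  · exact hy.2 (Set.mem_iUnion.2 ⟨⟨z, hwz⟩, by simp [h, upSet]; exact hzy⟩)
  · exact hx.2 (Set.mem_iUnion.2 ⟨⟨z, hwz⟩, by simp [h, downSet]; exact hxz⟩)

lemma localDedekind_antichain {n : ℕ} (S : Set (Cube n))
    (hS : IsAntichain (· ≤ ·) S) : localDedekind S = 2 ^ S.ncard := by
  have hmono : ∀ g : S → Bool, Monotone g := by
    intro g a b hab
    have : a = b := by
      by_contra h
      exact hS a.2 b.2 (fun e => h (Subtype.ext e)) hab
    rw [this]
  unfold localDedekind
  rw [Nat.card_congr (Equiv.subtypeUnivEquiv hmono)]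
  have : Nat.card (S → Bool) = Nat.card Bool ^ Nat.card S := Nat.card_fun
  rw [this, Nat.card_eq_fintype_card, Nat.card_coe_set_eq]
  simp

/-- for `A` the even-weight points of `E^n` (`n ≥ 3`) and any monotone
`f : A → Bool`, the set `E^n \ S_{A,f}` is an antichain and its local Dedekind number
is `2` to the power of its cardinality. -/
theorem antichain_and_power_of_two {n : ℕ} (hn : 3 ≤ n)
    (f : {a : Cube n | Even (weight a)} → Bool) (hf : Monotone f) :
    IsAntichain (· ≤ ·)
        ((Set.univ : Set (Cube n)) \ genSet {a : Cube n | Even (weight a)} f) ∧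
      localDedekind
          ((Set.univ : Set (Cube n)) \ genSet {a : Cube n | Even (weight a)} f) =
        2 ^ ((Set.univ : Set (Cube n)) \
              genSet {a : Cube n | Even (weight a)} f).ncard := by
  exact ⟨antichain_compl f, localDedekind_antichain _ (antichain_compl f)⟩
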